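/- Let ψ ∈ C_c^∞([0,∞)) be real, L > 0, R = L/(2π), R₊ ∈ (0, R], and let L₊ : [0, R₊] → ℝ and L₋ : [0,∞) → ℝ be measurable functions with 0 ≤ L₊(t) ≤ L − 2πt and 0 ≤ L₋(t) ≤ L + 2πt. Then ∫₀^{R₊} |ψ(R−t)|² L₊(t) dt + ∫₀^∞ |ψ(R+t)|² L₋(t) dt ≤ 2π ∫₀^∞ |ψ(r)|² r dr. -/

import Mathlib

open MeasureTheory Real intervalIntegral

/-- Transplantation does not increase the `L²`-norm: given the level-set length bounds
`0 ≤ L₊(t) ≤ L - 2πt` and `0 ≤ L₋(t) ≤ L + 2πt`, the transplanted norm is bounded by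
the polar-coordinate `L²`-norm of the radial function `ψ`. -/
theorem transplantation_l2_estimate (ψ : ℝ → ℝ) (hψ : ContDiff ℝ (⊤ : ℕ∞) ψ)
    (hsupp : HasCompactSupport ψ) (L R Rplus : ℝ) (hL : 0 < L) (hR : R = L / (2 * π))
    (hRp : 0 < Rplus) (hRpR : Rplus ≤ R)
    (Lplus Lminus : ℝ → ℝ) (hLpm : Measurable Lplus) (hLmm : Measurable Lminus)
    (hLp : ∀ t ∈ Set.Icc (0:ℝ) Rplus, 0 ≤ Lplus t ∧ Lplus t ≤ L - 2 * π * t)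
    (hLm : ∀ t : ℝ, 0 ≤ t → 0 ≤ Lminus t ∧ Lminus t ≤ L + 2 * π * t) :
    (∫ t in (0:ℝ)..Rplus, (ψ (R - t))^2 * Lplus t) +
      (∫ t in Set.Ioi (0:ℝ), (ψ (R + t))^2 * Lminus t)
      ≤ 2 * π * ∫ r in Set.Ioi (0:ℝ), (ψ r)^2 * r := by
  have hπ : 0 < π := Real.pi_pos
  have hL2 : L = 2 * π * R := by rw [hR]; field_simp
  set F : ℝ → ℝ := fun r => 2 * π * ((ψ r)^2 * r) with hF
  have hψc : Continuous ψ := hψ.continuous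
  have hFc : Continuous F :=
    continuous_const.mul ((hψc.pow 2).mul continuous_id)
  have hFsupp : HasCompactSupport F := by
    have h1 : HasCompactSupport (fun r => (ψ r)^2) := by
      simpa [pow_two, Pi.mul_def] using hsupp.mul_left (f := ψ)
    exact (h1.mul_right).mul_left
  have hFint : Integrable F := hFc.integrable_of_hasCompactSupport hFsupp
  have hFnn : ∀ r : ℝ, 0 ≤ r → 0 ≤ F r := fun r hr => by positivity
  obtain ⟨M, hM⟩ := hsupp.exists_bound_of_continuous hψc
  -- Step 1: first term
  have step1 : (∫ t in (0:ℝ)..Rplus, (ψ (R - t))^2 * Lplus t)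
      ≤ ∫ r in Set.Ioc (R - Rplus) R, F r := by
    have hsub : (∫ t in (0:ℝ)..Rplus, F (R - t)) = ∫ r in Set.Ioc (R - Rplus) R, F r := by
      rw [intervalIntegral.integral_comp_sub_left F R, sub_zero,
        intervalIntegral.integral_of_le (by linarith)]
    rw [← hsub]
    have hint1 : IntervalIntegrable (fun t => (ψ (R - t))^2 * Lplus t) volume 0 Rplus := by
      rw [intervalIntegrable_iff_integrableOn_Ioc_of_le hRp.le]
      have hmeas1 : AEStronglyMeasurable (fun t => (ψ (R - t))^2 * Lplus t) volume := by
        apply Measurable.aestronglyMeasurable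
        exact ((hψc.measurable.comp (measurable_const.sub measurable_id)).pow
          measurable_const).mul hLpm
      apply Measure.integrableOn_of_bounded (M := M^2 * L) measure_Ioc_lt_top.ne hmeas1
      · rw [ae_restrict_iff' measurableSet_Ioc]
        refine .of_forall fun t ht => ?_
        have h1 := hLp t ⟨ht.1.le, ht.2⟩
        have h2 := hM (R - t)
        have hψ2 : (ψ (R - t))^2 ≤ M^2 := by
          rw [← sq_abs]
          exact pow_le_pow_left₀ (abs_nonneg _) (by simpa using h2) 2
        have hMnn : 0 ≤ M := le_trans (norm_nonneg _) h2
        rw [Real.norm_eq_abs, abs_of_nonneg (mul_nonneg (sq_nonneg _) h1.1)]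
        have hLt : Lplus t ≤ L := by nlinarith [h1.2, ht.1.le]
        nlinarith [sq_nonneg (ψ (R - t)), h1.1]
    have hint2 : IntervalIntegrable (fun t => F (R - t)) volume 0 Rplus :=
      (hFc.comp (continuous_const.sub continuous_id)).intervalIntegrable 0 Rplus
    refine intervalIntegral.integral_mono_on hRp.le hint1 hint2 fun t ht => ?_
    have h1 := hLp t ht
    have : Lplus t ≤ 2 * π * (R - t) := by nlinarith [h1.2]
    have := mul_le_mul_of_nonneg_left this (sq_nonneg (ψ (R - t)))
    simp only [hF]; nlinarith [sq_nonneg (ψ (R - t))]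
  -- Step 2: second term
  have hGc : Continuous (fun t => F (R + t)) :=
    hFc.comp (continuous_const.add continuous_id)
  have hGsupp : HasCompactSupport (fun t => F (R + t)) := by
    have := hFsupp.comp_homeomorph (Homeomorph.addLeft R)
    simpa [Function.comp_def] using this
  have hGint : Integrable (fun t => F (R + t)) :=
    hGc.integrable_of_hasCompactSupport hGsupp
  have step2 : (∫ t in Set.Ioi (0:ℝ), (ψ (R + t))^2 * Lminus t)
      ≤ ∫ r in Set.Ioi R, F r := by
    have htrans : (∫ t in Set.Ioi (0:ℝ), F (R + t)) = ∫ r in Set.Ioi R, F r := by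
      rw [← MeasureTheory.integral_indicator measurableSet_Ioi,
        ← MeasureTheory.integral_indicator measurableSet_Ioi]
      have : ∀ t, (Set.Ioi (0:ℝ)).indicator (fun t => F (R + t)) t
          = (Set.Ioi R).indicator F (R + t) := by
        intro t
        simp [Set.indicator_apply, lt_add_iff_pos_right]
      rw [funext this]
      exact integral_add_left_eq_self ((Set.Ioi R).indicator F) R
    rw [← htrans]
    have hle : ∀ t ∈ Set.Ioi (0:ℝ), (ψ (R + t))^2 * Lminus t ≤ F (R + t) := by
      intro t ht
      have h1 := hLm t (le_of_lt ht)
      have : Lminus t ≤ 2 * π * (R + t) := by nlinarith [h1.2]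
      simp only [hF]
      nlinarith [sq_nonneg (ψ (R + t)), h1.1, mul_le_mul_of_nonneg_left this (sq_nonneg (ψ (R + t)))]
    have hint1 : IntegrableOn (fun t => (ψ (R + t))^2 * Lminus t) (Set.Ioi 0) := by
      have hmeas2 : AEStronglyMeasurable (fun t => (ψ (R + t))^2 * Lminus t) volume := by
        apply Measurable.aestronglyMeasurable
        exact ((hψc.measurable.comp (measurable_const.add measurable_id)).pow
          measurable_const).mul hLmm
      refine Integrable.mono hGint.integrableOn hmeas2.restrict ?_
      rw [ae_restrict_iff' measurableSet_Ioi]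
      refine .of_forall fun t ht => ?_
      have h1 := hLm t (le_of_lt ht)
      have h2 := hle t ht
      have h3 : 0 ≤ (ψ (R + t))^2 * Lminus t := mul_nonneg (sq_nonneg _) h1.1
      rw [Real.norm_eq_abs, Real.norm_eq_abs, abs_of_nonneg h3, abs_of_nonneg (le_trans h3 h2)]
      exact h2
    exact setIntegral_mono_on hint1 hGint.integrableOn measurableSet_Ioi hle
  -- Step 3: combine
  have hunion : (∫ r in Set.Ioc (R - Rplus) R, F r) + (∫ r in Set.Ioi R, F r)
      = ∫ r in Set.Ioi (R - Rplus), F r := by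
    rw [← setIntegral_union (Set.Ioc_disjoint_Ioi le_rfl) measurableSet_Ioi
      hFint.integrableOn hFint.integrableOn, Set.Ioc_union_Ioi_eq_Ioi (by linarith)]
  have hmono : (∫ r in Set.Ioi (R - Rplus), F r) ≤ ∫ r in Set.Ioi (0:ℝ), F r := by
    refine setIntegral_mono_set hFint.integrableOn ?_
      (HasSubset.Subset.eventuallyLE (Set.Ioi_subset_Ioi (by linarith)))
    filter_upwards [ae_restrict_mem measurableSet_Ioi] with r hr
    exact hFnn r hr.le
  have hfinal : (∫ r in Set.Ioi (0:ℝ), F r) = 2 * π * ∫ r in Set.Ioi (0:ℝ), (ψ r)^2 * r := by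
    simp only [hF]
    exact integral_const_mul _ _
  calc _ ≤ (∫ r in Set.Ioc (R - Rplus) R, F r) + (∫ r in Set.Ioi R, F r) :=
        add_le_add step1 step2
    _ = ∫ r in Set.Ioi (R - Rplus), F r := hunion
    _ ≤ ∫ r in Set.Ioi (0:ℝ), F r := hmono
    _ = _ := hfinal
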